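/- (Optimality of BSC reverse test channels) Let X be Bernoulli(1/2), let the channel P_{X|X̃} from X̃ to X be a BSC with crossover probability p ∈ [0,1/2), and fix a target conditional entropy value h = H(X|U) ∈ [H_b(p), 1] for an auxiliary U with U − X̃ − X Markov. Then H(X̃|U) ≤ H_b( (H_b⁻¹(h) − p)/(1 − 2p) ), and this bound is achieved when P_{X̃|U} is a BSC with crossover probability x̃ = (H_b⁻¹(h) − p)/(1 − 2p). -/

import Mathlib

/-!
Write `ψ t = Hb (p ⋆ Hb⁻¹ t)`. Given `U = u` (probability `q u`), `X̃` is Bernoulli(`a u`) and,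
by the Markov property, `X` is Bernoulli(`p ⋆ a u`); hence `H(X̃|U) = ∑ q u * Hb (a u)` and
`H(X|U) = ∑ q u * Hb (p ⋆ a u) = ∑ q u * ψ (Hb (a u))`, after replacing `a u` by
`min (a u) (1 - a u)`. The curve `ψ` is strictly increasing and convex on `[0, 1]`: its slope at
`Hb x` is `(1 - 2p) L (p ⋆ x) / L x`, `L` the log-odds, and this increases in `x` because
`x (1 - x) L x` is concave and vanishes at `1/2`. Jensen gives `ψ (H(X̃|U)) ≤ H(X|U) = ψ (Hb z)`
with `z = (Hb⁻¹ (H(X|U)) - p) / (1 - 2p)`, since `p ⋆ z = Hb⁻¹ (H(X|U))`. For a BSC(`z`) test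
channel every `a u` is `z` or `1 - z`, which gives equality.
-/

open scoped BigOperators

noncomputable def Hb (x : ℝ) : ℝ := -(x * Real.logb 2 x) - (1 - x) * Real.logb 2 (1 - x)

noncomputable def star (p q : ℝ) : ℝ := p * (1 - q) + (1 - p) * q

structure FinProb (Ω : Type) [Fintype Ω] where
  p : Ω → ℝ
  nonneg : ∀ ω, 0 ≤ p ω
  sum_one : ∑ ω, p ω = 1

noncomputable def pmfOf {Ω α : Type} [Fintype Ω] [DecidableEq α]
    (μ : FinProb Ω) (X : Ω → α) (a : α) : ℝ :=
  ∑ ω, if X ω = a then μ.p ω else 0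

noncomputable def H2 {Ω α : Type} [Fintype Ω] [Fintype α] [DecidableEq α]
    (μ : FinProb Ω) (X : Ω → α) : ℝ :=
  -∑ a, pmfOf μ X a * Real.logb 2 (pmfOf μ X a)

noncomputable def condH2 {Ω α β : Type} [Fintype Ω] [Fintype α] [Fintype β]
    [DecidableEq α] [DecidableEq β] (μ : FinProb Ω) (X : Ω → α) (Y : Ω → β) : ℝ :=
  H2 μ (fun ω => (X ω, Y ω)) - H2 μ Y

noncomputable def MI2 {Ω α β : Type} [Fintype Ω] [Fintype α] [Fintype β]
    [DecidableEq α] [DecidableEq β] (μ : FinProb Ω) (X : Ω → α) (Y : Ω → β) : ℝ :=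
  H2 μ X + H2 μ Y - H2 μ (fun ω => (X ω, Y ω))

def Markov3 {Ω α β γ : Type} [Fintype Ω] [DecidableEq α] [DecidableEq β] [DecidableEq γ]
    (μ : FinProb Ω) (X : Ω → α) (Y : Ω → β) (Z : Ω → γ) : Prop :=
  ∀ a b c, pmfOf μ (fun ω => (X ω, Y ω, Z ω)) (a, b, c) * pmfOf μ Y b =
    pmfOf μ (fun ω => (X ω, Y ω)) (a, b) * pmfOf μ (fun ω => (Y ω, Z ω)) (b, c)

open Set Real

lemma Hb_eq_binEntropy_div (x : ℝ) : Hb x = binEntropy x / log 2 := by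
  unfold Hb binEntropy logb
  rw [log_inv, log_inv]
  ring

lemma continuous_Hb : Continuous Hb := by
  simpa only [funext Hb_eq_binEntropy_div] using binEntropy_continuous.div_const (log 2)

lemma Hb_one_sub (x : ℝ) : Hb (1 - x) = Hb x := by
  simp only [Hb_eq_binEntropy_div, binEntropy_one_sub]

lemma Hb_zero : Hb 0 = 0 := by simp [Hb]

lemma Hb_half : Hb (1 / 2) = 1 := by
  rw [Hb_eq_binEntropy_div, one_div, binEntropy_two_inv, div_self (log_pos one_lt_two).ne']

lemma Hb_nonneg {x : ℝ} (h0 : 0 ≤ x) (h1 : x ≤ 1) : 0 ≤ Hb x := by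
  rw [Hb_eq_binEntropy_div]
  exact div_nonneg (binEntropy_nonneg h0 h1) (log_pos one_lt_two).le

lemma Hb_le_one (x : ℝ) : Hb x ≤ 1 := by
  rw [Hb_eq_binEntropy_div, div_le_one (log_pos one_lt_two)]
  exact binEntropy_le_log_two

lemma Hb_mem_Icc {x : ℝ} (h0 : 0 ≤ x) (h1 : x ≤ 1) : Hb x ∈ Icc (0 : ℝ) 1 :=
  ⟨Hb_nonneg h0 h1, Hb_le_one x⟩

lemma strictMonoOn_Hb : StrictMonoOn Hb (Icc 0 (1 / 2)) := by
  intro x hx y hy hxy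
  rw [Hb_eq_binEntropy_div, Hb_eq_binEntropy_div, div_lt_div_iff_of_pos_right (log_pos one_lt_two)]
  rw [one_div] at hx hy
  exact binEntropy_strictMonoOn hx hy hxy

lemma add_mul_Hb_div_add {s t : ℝ} (hs : 0 ≤ s) (ht : 0 ≤ t) :
    (s + t) * Hb (s / (s + t)) =
      (s + t) * logb 2 (s + t) - s * logb 2 s - t * logb 2 t := by
  rcases (add_nonneg hs ht).eq_or_lt with hq | hq
  · obtain ⟨rfl, rfl⟩ : s = 0 ∧ t = 0 := ⟨by linarith, by linarith⟩
    simp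
  · have hs' : s = (s + t) * (s / (s + t)) := by field_simp
    have ht' : t = (s + t) * (1 - s / (s + t)) := by field_simp; ring
    have key : negMulLog ((s + t) * (s / (s + t))) + negMulLog ((s + t) * (1 - s / (s + t))) =
        negMulLog (s + t) + (s + t) * binEntropy (s / (s + t)) := by
      rw [binEntropy_eq_negMulLog_add_negMulLog_one_sub, negMulLog_mul, negMulLog_mul]
      ring
    rw [← hs', ← ht'] at key
    simp only [Hb_eq_binEntropy_div, logb, negMulLog] at key ⊢
    field_simp
    linarith

lemma star_eq (p x : ℝ) : star p x = p + (1 - 2 * p) * x := by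
  unfold _root_.star; ring

lemma star_one_sub (p x : ℝ) : star p (1 - x) = 1 - star p x := by
  unfold _root_.star; ring

lemma star_mem_Icc {p x : ℝ} (hp0 : 0 ≤ p) (hp : p ≤ 1 / 2) (hx : x ∈ Icc (0 : ℝ) (1 / 2)) :
    star p x ∈ Icc (0 : ℝ) (1 / 2) := by
  rw [star_eq]
  constructor <;> nlinarith [hx.1, hx.2]

lemma star_mem_Ioo {p x : ℝ} (hp0 : 0 ≤ p) (hp : p < 1 / 2) (hx : x ∈ Ioo (0 : ℝ) (1 / 2)) :
    star p x ∈ Ioo (0 : ℝ) (1 / 2) := by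
  rw [star_eq]
  constructor <;> nlinarith [hx.1, hx.2]

noncomputable def logOdds (x : ℝ) : ℝ := log (1 - x) - log x

lemma hasDerivAt_Hb {x : ℝ} (h0 : x ≠ 0) (h1 : x ≠ 1) :
    HasDerivAt Hb (logOdds x / log 2) x := by
  simpa only [funext Hb_eq_binEntropy_div, logOdds] using
    (hasDerivAt_binEntropy h0 h1).div_const (log 2)

lemma hasDerivAt_logOdds {x : ℝ} (h0 : x ≠ 0) (h1 : x ≠ 1) :
    HasDerivAt logOdds (-(x * (1 - x))⁻¹) x := by
  have h1' : 1 - x ≠ 0 := sub_ne_zero.mpr h1.symm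
  refine ((((hasDerivAt_id' x).const_sub 1).log h1').sub (hasDerivAt_log h0)).congr_deriv ?_
  field_simp
  ring

lemma logOdds_pos {x : ℝ} (h0 : 0 < x) (h1 : x < 1 / 2) : 0 < logOdds x :=
  sub_pos.mpr (log_lt_log h0 (by linarith))

lemma logOdds_nonneg {x : ℝ} (h0 : 0 < x) (h1 : x ≤ 1 / 2) : 0 ≤ logOdds x :=
  sub_nonneg.mpr (log_le_log h0 (by linarith))

noncomputable def oddsWeight (x : ℝ) : ℝ := x * (1 - x) * logOdds x

lemma continuous_oddsWeight : Continuous oddsWeight := by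
  have : oddsWeight = fun x => x * ((1 - x) * log (1 - x)) - (1 - x) * (x * log x) := by
    funext x; unfold oddsWeight logOdds; ring
  rw [this]
  exact (continuous_id.mul (continuous_mul_log.comp (continuous_const.sub continuous_id))).sub
    ((continuous_const.sub continuous_id).mul continuous_mul_log)

lemma concaveOn_oddsWeight : ConcaveOn ℝ (Icc 0 (1 / 2)) oddsWeight := by
  have hint : ∀ x ∈ interior (Icc (0 : ℝ) (1 / 2)), x ≠ 0 ∧ x ≠ 1 := fun x hx => by
    rw [interior_Icc] at hx; exact ⟨hx.1.ne', by linarith [hx.2]⟩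
  refine concaveOn_of_hasDerivWithinAt2_nonpos (convex_Icc _ _)
    continuous_oddsWeight.continuousOn (f' := fun x => (1 - 2 * x) * logOdds x - 1)
    (f'' := fun x => -2 * logOdds x - (1 - 2 * x) / (x * (1 - x))) (fun x hx => ?_)
    (fun x hx => ?_) (fun x hx => ?_)
  · obtain ⟨h0, h1⟩ := hint x hx
    have := (((hasDerivAt_id' x).mul ((hasDerivAt_id' x).const_sub 1)).mul
      (hasDerivAt_logOdds h0 h1))
    refine (this.congr_deriv ?_).hasDerivWithinAt
    have : 1 - x ≠ 0 := sub_ne_zero.mpr h1.symm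
    simp only [Pi.mul_apply]
    field_simp
    ring
  · obtain ⟨h0, h1⟩ := hint x hx
    have := ((((hasDerivAt_id' x).const_mul 2).const_sub 1).mul
      (hasDerivAt_logOdds h0 h1)).sub_const 1
    refine (this.congr_deriv ?_).hasDerivWithinAt
    have : 1 - x ≠ 0 := sub_ne_zero.mpr h1.symm
    field_simp
    ring
  · rw [interior_Icc] at hx
    have := logOdds_nonneg hx.1 hx.2.le
    have : 0 ≤ (1 - 2 * x) / (x * (1 - x)) :=
      div_nonneg (by linarith [hx.2]) (mul_nonneg hx.1.le (by linarith [hx.2]))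
    linarith

lemma oddsWeight_le_oddsWeight_star {p x : ℝ} (hp0 : 0 ≤ p) (hp : p ≤ 1 / 2)
    (hx : x ∈ Icc (0 : ℝ) (1 / 2)) :
    (1 - 2 * p) * oddsWeight x ≤ oddsWeight (star p x) := by
  have h := concaveOn_oddsWeight.2 hx (right_mem_Icc.2 (by norm_num : (0 : ℝ) ≤ 1 / 2))
    (by linarith : (0 : ℝ) ≤ 1 - 2 * p) (by linarith : (0 : ℝ) ≤ 2 * p) (by ring)
  have h0 : oddsWeight (1 / 2) = 0 := by norm_num [oddsWeight, logOdds]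
  have harg : (1 - 2 * p) * x + 2 * p * (1 / 2) = star p x := by rw [star_eq]; ring
  simpa only [smul_eq_mul, h0, mul_zero, add_zero, harg] using h

/-- The derivative of `t ↦ Hb (p ⋆ Hb⁻¹ t)` at `t = Hb x`. -/
noncomputable def gerberSlope (p x : ℝ) : ℝ := (1 - 2 * p) * logOdds (star p x) / logOdds x

lemma hasDerivAt_gerberSlope {p x : ℝ} (hp0 : 0 ≤ p) (hp : p < 1 / 2)
    (hx : x ∈ Ioo (0 : ℝ) (1 / 2)) :
    HasDerivAt (gerberSlope p)
      ((1 - 2 * p) * (oddsWeight (star p x) - (1 - 2 * p) * oddsWeight x) /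
        (x * (1 - x) * (star p x * (1 - star p x)) * logOdds x ^ 2)) x := by
  have hy := star_mem_Ioo hp0 hp hx
  have hstar : HasDerivAt (star p) (1 - 2 * p) x := by
    simpa only [funext (star_eq p), mul_one] using
      ((hasDerivAt_id' x).const_mul (1 - 2 * p)).const_add p
  have hnum := ((hasDerivAt_logOdds hy.1.ne' (by linarith [hy.2])).comp x hstar).const_mul
    (1 - 2 * p)
  have hden := hasDerivAt_logOdds hx.1.ne' (by linarith [hx.2])
  refine (hnum.div hden (logOdds_pos hx.1 hx.2).ne').congr_deriv ?_
  have : 1 - x ≠ 0 := by linarith [hx.2]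
  have : 1 - star p x ≠ 0 := by linarith [hy.2]
  have := hx.1.ne'
  have := hy.1.ne'
  have := (logOdds_pos hx.1 hx.2).ne'
  simp only [Function.comp_apply, oddsWeight]
  field_simp
  ring

lemma monotoneOn_gerberSlope {p : ℝ} (hp0 : 0 ≤ p) (hp : p < 1 / 2) :
    MonotoneOn (gerberSlope p) (Ioo 0 (1 / 2)) := by
  have hdiff : DifferentiableOn ℝ (gerberSlope p) (Ioo 0 (1 / 2)) := fun x hx =>
    (hasDerivAt_gerberSlope hp0 hp hx).differentiableAt.differentiableWithinAt
  refine monotoneOn_of_deriv_nonneg (convex_Ioo _ _) hdiff.continuousOn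
    (by rwa [interior_Ioo]) fun x hx => ?_
  rw [interior_Ioo] at hx
  rw [(hasDerivAt_gerberSlope hp0 hp hx).deriv]
  have hy := star_mem_Ioo hp0 hp hx
  have hchord := oddsWeight_le_oddsWeight_star hp0 hp.le ⟨hx.1.le, hx.2.le⟩
  have : 0 < x * (1 - x) := mul_pos hx.1 (by linarith [hx.2])
  have : 0 < star p x * (1 - star p x) := mul_pos hy.1 (by linarith [hy.2])
  exact div_nonneg (mul_nonneg (by linarith) (by linarith)) (by positivity)

def IsInvHb (g : ℝ → ℝ) : Prop := ∀ y ∈ Icc (0 : ℝ) 1, g y ∈ Icc (0 : ℝ) (1 / 2) ∧ Hb (g y) = y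

namespace IsInvHb

variable {g : ℝ → ℝ}

lemma apply_Hb (hg : IsInvHb g) {x : ℝ} (hx : x ∈ Icc (0 : ℝ) (1 / 2)) : g (Hb x) = x := by
  have hHb := Hb_mem_Icc hx.1 (by linarith [hx.2])
  exact strictMonoOn_Hb.injOn (hg _ hHb).1 hx (hg _ hHb).2

lemma strictMonoOn (hg : IsInvHb g) : StrictMonoOn g (Icc 0 1) := by
  intro s hs t ht hst
  by_contra! hts
  have := strictMonoOn_Hb.monotoneOn (hg t ht).1 (hg s hs).1 hts
  rw [(hg s hs).2, (hg t ht).2] at this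
  linarith

lemma continuousOn (hg : IsInvHb g) : ContinuousOn g (Icc 0 1) := by
  let g' : Icc (0 : ℝ) 1 → Icc (0 : ℝ) (1 / 2) := fun t => ⟨g t, (hg t t.2).1⟩
  have hmono : Monotone g' := fun s t hst => hg.strictMonoOn.monotoneOn s.2 t.2 hst
  have hsurj : Function.Surjective g' := fun x =>
    ⟨⟨Hb x, Hb_mem_Icc x.2.1 (by linarith [x.2.2])⟩, Subtype.ext (hg.apply_Hb x.2)⟩
  rw [continuousOn_iff_continuous_domRestrict]
  exact continuous_subtype_val.comp (hmono.continuous_of_surjective hsurj)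

lemma mem_Ioo (hg : IsInvHb g) {t : ℝ} (ht : t ∈ Ioo (0 : ℝ) 1) : g t ∈ Ioo (0 : ℝ) (1 / 2) := by
  obtain ⟨⟨h0, h1⟩, hHb⟩ := hg t ⟨ht.1.le, ht.2.le⟩
  refine ⟨h0.lt_of_ne ?_, h1.lt_of_ne ?_⟩ <;> rintro h
  · rw [← h, Hb_zero] at hHb; linarith [ht.1]
  · rw [h, Hb_half] at hHb; linarith [ht.2]

lemma hasDerivAt (hg : IsInvHb g) {t : ℝ} (ht : t ∈ Ioo (0 : ℝ) 1) :
    HasDerivAt g (logOdds (g t) / log 2)⁻¹ t := by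
  have hgt := hg.mem_Ioo ht
  have hnhds := Icc_mem_nhds ht.1 ht.2
  refine HasDerivAt.of_local_left_inverse (hg.continuousOn.continuousAt hnhds)
    (hasDerivAt_Hb hgt.1.ne' (by linarith [hgt.2]))
    (div_pos (logOdds_pos hgt.1 hgt.2) (log_pos one_lt_two)).ne' ?_
  filter_upwards [hnhds] with s hs using (hg s hs).2

end IsInvHb

lemma min_one_sub_mem_Icc {a : ℝ} (ha : a ∈ Icc (0 : ℝ) 1) : min a (1 - a) ∈ Icc (0 : ℝ) (1 / 2) :=
  ⟨le_min ha.1 (by linarith [ha.2]), by rcases min_cases a (1 - a) with h | h <;> linarith⟩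

lemma Hb_min_one_sub (a : ℝ) : Hb (min a (1 - a)) = Hb a := by
  rcases min_cases a (1 - a) with ⟨h, _⟩ | ⟨h, _⟩ <;> simp only [h, Hb_one_sub]

lemma Hb_star_min_one_sub (p a : ℝ) : Hb (star p (min a (1 - a))) = Hb (star p a) := by
  rcases min_cases a (1 - a) with ⟨h, _⟩ | ⟨h, _⟩ <;> simp only [h, star_one_sub, Hb_one_sub]

lemma sum_mul_Hb_mem_Icc {ι : Type} [Fintype ι] (q a : ι → ℝ) (hq : ∀ i, 0 ≤ q i)
    (hq1 : ∑ i, q i = 1) (ha : ∀ i, a i ∈ Icc (0 : ℝ) 1) :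
    ∑ i, q i * Hb (a i) ∈ Icc (0 : ℝ) 1 :=
  ⟨Finset.sum_nonneg fun i _ => mul_nonneg (hq i) (Hb_nonneg (ha i).1 (ha i).2),
    hq1 ▸ Finset.sum_le_sum fun i _ => mul_le_of_le_one_right (hq i) (Hb_le_one _)⟩

noncomputable def gerberCurve (g : ℝ → ℝ) (p t : ℝ) : ℝ := Hb (star p (g t))

section gerberCurve

variable {g : ℝ → ℝ} {p : ℝ}

lemma gerberCurve_Hb (hg : IsInvHb g) {x : ℝ} (hx : x ∈ Icc (0 : ℝ) (1 / 2)) :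
    gerberCurve g p (Hb x) = Hb (star p x) := by
  rw [gerberCurve, hg.apply_Hb hx]

lemma strictMonoOn_gerberCurve (hg : IsInvHb g) (hp0 : 0 ≤ p) (hp : p < 1 / 2) :
    StrictMonoOn (gerberCurve g p) (Icc 0 1) := by
  intro s hs t ht hst
  refine strictMonoOn_Hb (star_mem_Icc hp0 hp.le (hg s hs).1)
    (star_mem_Icc hp0 hp.le (hg t ht).1) ?_
  rw [star_eq, star_eq]
  nlinarith [hg.strictMonoOn hs ht hst]

lemma hasDerivAt_gerberCurve (hg : IsInvHb g) (hp0 : 0 ≤ p) (hp : p < 1 / 2) {t : ℝ}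
    (ht : t ∈ Ioo (0 : ℝ) 1) :
    HasDerivAt (gerberCurve g p) (gerberSlope p (g t)) t := by
  have hgt := hg.mem_Ioo ht
  have hy := star_mem_Ioo hp0 hp hgt
  have hstar : HasDerivAt (fun s => star p (g s)) ((1 - 2 * p) * (logOdds (g t) / log 2)⁻¹) t := by
    simpa only [star_eq] using ((hg.hasDerivAt ht).const_mul (1 - 2 * p)).const_add p
  refine ((hasDerivAt_Hb hy.1.ne' (by linarith [hy.2])).comp t hstar).congr_deriv ?_
  have := (log_pos one_lt_two).ne'
  rw [gerberSlope]
  field_simp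

lemma convexOn_gerberCurve (hg : IsInvHb g) (hp0 : 0 ≤ p) (hp : p < 1 / 2) :
    ConvexOn ℝ (Icc 0 1) (gerberCurve g p) := by
  have hcont : ContinuousOn (gerberCurve g p) (Icc 0 1) := by
    refine continuous_Hb.comp_continuousOn ?_
    simp only [star_eq]
    have := hg.continuousOn
    fun_prop
  refine MonotoneOn.convexOn_of_deriv (convex_Icc _ _) hcont ?_ ?_
  · rw [interior_Icc]
    exact fun t ht => (hasDerivAt_gerberCurve hg hp0 hp ht).differentiableAt.differentiableWithinAt
  · rw [interior_Icc]
    intro s hs t ht hst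
    rw [(hasDerivAt_gerberCurve hg hp0 hp hs).deriv, (hasDerivAt_gerberCurve hg hp0 hp ht).deriv]
    exact monotoneOn_gerberSlope hp0 hp (hg.mem_Ioo hs) (hg.mem_Ioo ht)
      (hg.strictMonoOn.monotoneOn ⟨hs.1.le, hs.2.le⟩ ⟨ht.1.le, ht.2.le⟩ hst)

theorem gerberCurve_sum_le (hg : IsInvHb g) (hp0 : 0 ≤ p) (hp : p < 1 / 2)
    {ι : Type} [Fintype ι] (q a : ι → ℝ) (hq : ∀ i, 0 ≤ q i) (hq1 : ∑ i, q i = 1)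
    (ha : ∀ i, a i ∈ Icc (0 : ℝ) 1) :
    gerberCurve g p (∑ i, q i * Hb (a i)) ≤ ∑ i, q i * Hb (star p (a i)) := by
  have hx := fun i => min_one_sub_mem_Icc (ha i)
  have hjensen := (convexOn_gerberCurve hg hp0 hp).map_sum_le (t := Finset.univ) (w := q)
    (p := fun i => Hb (min (a i) (1 - a i))) (fun i _ => hq i) hq1
    (fun i _ => Hb_mem_Icc (hx i).1 (by linarith [(hx i).2]))
  have hcurve (i : ι) : gerberCurve g p (Hb (min (a i) (1 - a i))) = Hb (star p (a i)) := by
    rw [gerberCurve_Hb hg (hx i), Hb_star_min_one_sub]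
  simp only [smul_eq_mul, hcurve] at hjensen
  simpa only [Hb_min_one_sub] using hjensen

lemma le_Hb_of_gerberCurve_le (hg : IsInvHb g) (hp0 : 0 ≤ p) (hp : p < 1 / 2) {A h : ℝ}
    (hA : A ∈ Icc (0 : ℝ) 1) (hh : h ∈ Icc (Hb p) 1) (hAh : gerberCurve g p A ≤ h) :
    A ≤ Hb ((g h - p) / (1 - 2 * p)) := by
  have h2p : 0 < 1 - 2 * p := by linarith
  have hh01 : h ∈ Icc (0 : ℝ) 1 := ⟨(Hb_nonneg hp0 (by linarith)).trans hh.1, hh.2⟩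
  have hgh := (hg h hh01).1
  have hpg : p ≤ g h := by
    simpa only [hg.apply_Hb ⟨hp0, hp.le⟩] using
      hg.strictMonoOn.monotoneOn (Hb_mem_Icc hp0 (by linarith)) hh01 hh.1
  have hz : (g h - p) / (1 - 2 * p) ∈ Icc (0 : ℝ) (1 / 2) :=
    ⟨div_nonneg (by linarith) h2p.le, by rw [div_le_iff₀ h2p]; linarith [hgh.2]⟩
  have hstar : star p ((g h - p) / (1 - 2 * p)) = g h := by
    rw [star_eq, mul_div_cancel₀ _ h2p.ne']
    ring
  have hcurve : gerberCurve g p (Hb ((g h - p) / (1 - 2 * p))) = h := by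
    rw [gerberCurve_Hb hg hz, hstar, (hg h hh01).2]
  rw [← (strictMonoOn_gerberCurve hg hp0 hp).le_iff_le hA (Hb_mem_Icc hz.1 (by linarith [hz.2])),
    hcurve]
  exact hAh

end gerberCurve

section pmfOf

variable {Ω : Type} [Fintype Ω] (μ : FinProb Ω)

lemma pmfOf_nonneg {α : Type} [DecidableEq α] (X : Ω → α) (a : α) : 0 ≤ pmfOf μ X a :=
  Finset.sum_nonneg fun ω _ => by split_ifs <;> simp [μ.nonneg ω]

lemma sum_pmfOf {α : Type} [Fintype α] [DecidableEq α] (X : Ω → α) : ∑ a, pmfOf μ X a = 1 := by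
  unfold pmfOf
  rw [Finset.sum_comm, ← μ.sum_one]
  simp

lemma pmfOf_le_pmfOf {α β : Type} [DecidableEq α] [DecidableEq β] {X : Ω → α} {Y : Ω → β}
    {a : α} {b : β} (h : ∀ ω, X ω = a → Y ω = b) : pmfOf μ X a ≤ pmfOf μ Y b :=
  Finset.sum_le_sum fun ω _ => by
    by_cases hX : X ω = a
    · simp [hX, h ω hX]
    · simp only [hX, if_false]; split_ifs <;> simp [μ.nonneg ω]

lemma pmfOf_congr {α β : Type} [DecidableEq α] [DecidableEq β] {X : Ω → α} {Y : Ω → β}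
    {a : α} {b : β} (h : ∀ ω, X ω = a ↔ Y ω = b) : pmfOf μ X a = pmfOf μ Y b :=
  (pmfOf_le_pmfOf μ fun ω => (h ω).1).antisymm (pmfOf_le_pmfOf μ fun ω => (h ω).2)

lemma pmfOf_eq_sum_pmfOf_pair {α β : Type} [DecidableEq α] [Fintype β] [DecidableEq β]
    (X : Ω → α) (Y : Ω → β) (a : α) :
    pmfOf μ X a = ∑ b, pmfOf μ (fun ω => (X ω, Y ω)) (a, b) := by
  unfold pmfOf
  rw [Finset.sum_comm]
  refine Finset.sum_congr rfl fun ω _ => ?_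
  simp [Prod.ext_iff, ite_and]

lemma pmfOf_pair_eq_sum_pmfOf_triple {α β γ : Type} [DecidableEq α] [Fintype β] [DecidableEq β]
    [DecidableEq γ] (X : Ω → α) (Y : Ω → β) (Z : Ω → γ) (a : α) (c : γ) :
    pmfOf μ (fun ω => (X ω, Z ω)) (a, c) = ∑ b, pmfOf μ (fun ω => (X ω, Y ω, Z ω)) (a, b, c) := by
  unfold pmfOf
  rw [Finset.sum_comm]
  refine Finset.sum_congr rfl fun ω _ => ?_
  by_cases hX : X ω = a <;> by_cases hZ : Z ω = c <;> simp [Prod.ext_iff, hX, hZ]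

lemma pmfOf_triple_eq_of_markov {α β γ : Type} [DecidableEq α] [DecidableEq β] [DecidableEq γ]
    {X : Ω → α} {Y : Ω → β} {Z : Ω → γ} {K : β → γ → ℝ}
    (hK : ∀ b c, pmfOf μ (fun ω => (Y ω, Z ω)) (b, c) = pmfOf μ Y b * K b c)
    (hm : Markov3 μ X Y Z) (a : α) (b : β) (c : γ) :
    pmfOf μ (fun ω => (X ω, Y ω, Z ω)) (a, b, c) =
      pmfOf μ (fun ω => (X ω, Y ω)) (a, b) * K b c := by
  by_cases hb : pmfOf μ Y b = 0
  · have hXYZ := pmfOf_le_pmfOf μ (X := fun ω => (X ω, Y ω, Z ω)) (a := (a, b, c)) (Y := Y)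
      (b := b) fun ω h => by simp_all [Prod.ext_iff]
    have hXY := pmfOf_le_pmfOf μ (X := fun ω => (X ω, Y ω)) (a := (a, b)) (Y := Y)
      (b := b) fun ω h => by simp_all [Prod.ext_iff]
    rw [le_antisymm (hb ▸ hXYZ) (pmfOf_nonneg μ _ _), le_antisymm (hb ▸ hXY) (pmfOf_nonneg μ _ _),
      zero_mul]
  · refine mul_right_cancel₀ hb ((hm a b c).trans ?_)
    rw [hK]
    ring

lemma pmfOf_pair_div_mem_Icc {α β : Type} [DecidableEq α] [DecidableEq β]
    (U : Ω → α) (W : Ω → β) (u : α) (b : β) :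
    pmfOf μ (fun ω => (U ω, W ω)) (u, b) / pmfOf μ U u ∈ Icc (0 : ℝ) 1 :=
  ⟨div_nonneg (pmfOf_nonneg μ _ _) (pmfOf_nonneg μ _ _),
    div_le_one_of_le₀ (pmfOf_le_pmfOf μ fun ω h => by simp_all [Prod.ext_iff])
      (pmfOf_nonneg μ _ _)⟩

end pmfOf

section condH2

variable {Ω β : Type} [Fintype Ω] [DecidableEq β] (μ : FinProb Ω)

lemma condH2_eq_sum_Hb [Fintype β] (W : Ω → Bool) (U : Ω → β) :
    condH2 μ W U = ∑ u, pmfOf μ U u *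
      Hb (pmfOf μ (fun ω => (U ω, W ω)) (u, true) / pmfOf μ U u) := by
  unfold condH2 H2
  rw [Fintype.sum_prod_type, Fintype.sum_bool, neg_sub_neg, ← Finset.sum_add_distrib,
    ← Finset.sum_sub_distrib]
  refine Finset.sum_congr rfl fun u _ => ?_
  have hswap (b : Bool) : pmfOf μ (fun ω => (W ω, U ω)) (b, u) =
      pmfOf μ (fun ω => (U ω, W ω)) (u, b) :=
    pmfOf_congr μ fun ω => by simp only [Prod.ext_iff, and_comm]
  rw [hswap, hswap, pmfOf_eq_sum_pmfOf_pair μ U W u, Fintype.sum_bool,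
    add_mul_Hb_div_add (pmfOf_nonneg μ _ _) (pmfOf_nonneg μ _ _)]
  ring

lemma condH2_eq_Hb_of_pmfOf_pair_eq_mul [Fintype β] (W : Ω → Bool) (U : Ω → β) (c : β → Bool)
    (z : ℝ)
    (hc : ∀ u, pmfOf μ (fun ω => (U ω, W ω)) (u, !(c u)) = pmfOf μ U u * z) :
    condH2 μ W U = Hb z := by
  rw [condH2_eq_sum_Hb, ← one_mul (Hb z), ← sum_pmfOf μ U, Finset.sum_mul]
  refine Finset.sum_congr rfl fun u _ => ?_
  rcases (pmfOf_nonneg μ U u).eq_or_lt with hq | hq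
  · rw [← hq, zero_mul, zero_mul]
  have hsplit := pmfOf_eq_sum_pmfOf_pair μ U W u
  rw [Fintype.sum_bool] at hsplit
  have hc := hc u
  cases hcu : c u
  · rw [hcu, Bool.not_false] at hc
    rw [hc, mul_div_cancel_left₀ _ hq.ne']
  · rw [hcu, Bool.not_true] at hc
    rw [show pmfOf μ (fun ω => (U ω, W ω)) (u, true) = pmfOf μ U u * (1 - z) by linarith,
      mul_div_cancel_left₀ _ hq.ne', Hb_one_sub]

variable {U : Ω → β} {Xt X : Ω → Bool} {p : ℝ}

lemma pmfOf_pair_true_eq_star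
    (hrev : ∀ xt x, pmfOf μ (fun ω => (Xt ω, X ω)) (xt, x) =
      pmfOf μ Xt xt * (if x = xt then 1 - p else p))
    (hmarkov : Markov3 μ U Xt X) (u : β) :
    pmfOf μ (fun ω => (U ω, X ω)) (u, true) =
      pmfOf μ U u * star p (pmfOf μ (fun ω => (U ω, Xt ω)) (u, true) / pmfOf μ U u) := by
  rw [pmfOf_pair_eq_sum_pmfOf_triple μ U Xt X, Fintype.sum_bool,
    pmfOf_triple_eq_of_markov μ hrev hmarkov, pmfOf_triple_eq_of_markov μ hrev hmarkov,
    pmfOf_eq_sum_pmfOf_pair μ U Xt u, Fintype.sum_bool]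
  have hs := pmfOf_nonneg μ (fun ω => (U ω, Xt ω)) (u, true)
  have ht := pmfOf_nonneg μ (fun ω => (U ω, Xt ω)) (u, false)
  rcases (add_nonneg hs ht).eq_or_lt with hq | hq
  · rw [← hq, show pmfOf μ (fun ω => (U ω, Xt ω)) (u, true) = 0 by linarith,
      show pmfOf μ (fun ω => (U ω, Xt ω)) (u, false) = 0 by linarith]
    simp
  · rw [star_eq]
    field_simp
    simp only [if_true, Bool.true_eq_false, if_false]
    ring

lemma condH2_eq_sum_Hb_star [Fintype β]
    (hrev : ∀ xt x, pmfOf μ (fun ω => (Xt ω, X ω)) (xt, x) =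
      pmfOf μ Xt xt * (if x = xt then 1 - p else p))
    (hmarkov : Markov3 μ U Xt X) :
    condH2 μ X U = ∑ u, pmfOf μ U u *
      Hb (star p (pmfOf μ (fun ω => (U ω, Xt ω)) (u, true) / pmfOf μ U u)) := by
  rw [condH2_eq_sum_Hb]
  refine Finset.sum_congr rfl fun u _ => ?_
  rcases (pmfOf_nonneg μ U u).eq_or_lt with hq | hq
  · rw [← hq, zero_mul, zero_mul]
  · rw [pmfOf_pair_true_eq_star μ hrev hmarkov, mul_div_cancel_left₀ _ hq.ne']

end condH2

theorem bsc_reverse_optimal_general {Ω U' : Type} [Fintype Ω] [Fintype U'] [DecidableEq U']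
    (μ : FinProb Ω) (U : Ω → U') (Xt X : Ω → Bool) (p : ℝ)
    (hp : p ∈ Set.Ico (0:ℝ) (1/2))
    (hrev : ∀ xt x, pmfOf μ (fun ω => (Xt ω, X ω)) (xt, x) =
      pmfOf μ Xt xt * (if x = xt then 1 - p else p))
    (hmarkov : Markov3 μ U Xt X)
    (g : ℝ → ℝ) (hg : ∀ y ∈ Set.Icc (0:ℝ) 1, g y ∈ Set.Icc (0:ℝ) (1/2) ∧ Hb (g y) = y)
    (hh : condH2 μ X U ∈ Set.Icc (Hb p) 1) :
    condH2 μ Xt U ≤ Hb ((g (condH2 μ X U) - p) / (1 - 2 * p)) ∧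
    (∀ c : U' → Bool,
      (∀ u, pmfOf μ (fun ω => (U ω, Xt ω)) (u, !(c u)) =
        pmfOf μ U u * ((g (condH2 μ X U) - p) / (1 - 2 * p))) →
      condH2 μ Xt U = Hb ((g (condH2 μ X U) - p) / (1 - 2 * p))) := by
  obtain ⟨hp0, hp⟩ := hp
  refine ⟨?_, fun c hc => condH2_eq_Hb_of_pmfOf_pair_eq_mul μ Xt U c _ hc⟩
  have ha := (pmfOf_pair_div_mem_Icc μ U Xt · true)
  rw [condH2_eq_sum_Hb]
  refine le_Hb_of_gerberCurve_le hg hp0 hp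
    (sum_mul_Hb_mem_Icc _ _ (pmfOf_nonneg μ U) (sum_pmfOf μ U) ha) hh ?_
  rw [condH2_eq_sum_Hb_star μ hrev hmarkov]
  exact gerberCurve_sum_le hg hp0 hp _ _ (pmfOf_nonneg μ U) (sum_pmfOf μ U) ha

theorem bsc_reverse_optimal {Ω U' : Type} [Fintype Ω] [Fintype U'] [DecidableEq U']
    (μ : FinProb Ω) (U : Ω → U') (Xt X : Ω → Bool) (p : ℝ)
    (hp : p ∈ Set.Ico (0:ℝ) (1/2))
    (hX : ∀ x, pmfOf μ X x = 1/2)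
    (hrev : ∀ xt x, pmfOf μ (fun ω => (Xt ω, X ω)) (xt, x) =
      pmfOf μ Xt xt * (if x = xt then 1 - p else p))
    (hmarkov : Markov3 μ U Xt X)
    (g : ℝ → ℝ) (hg : ∀ y ∈ Set.Icc (0:ℝ) 1, g y ∈ Set.Icc (0:ℝ) (1/2) ∧ Hb (g y) = y)
    (hh : condH2 μ X U ∈ Set.Icc (Hb p) 1) :
    condH2 μ Xt U ≤ Hb ((g (condH2 μ X U) - p) / (1 - 2 * p)) ∧
    (∀ c : U' → Bool,
      (∀ u, pmfOf μ (fun ω => (U ω, Xt ω)) (u, !(c u)) =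
        pmfOf μ U u * ((g (condH2 μ X U) - p) / (1 - 2 * p))) →
      condH2 μ Xt U = Hb ((g (condH2 μ X U) - p) / (1 - 2 * p))) :=
  bsc_reverse_optimal_general μ U Xt X p hp hrev hmarkov g hg hh
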